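/- Let A be a real reduced multiring and define the ternary relation D on A by d ∈ D(a, b) ⟺ d ∈ d²a + d²b. Then (A, ·, 1, 0, −1, D) is a real semigroup. -/

import Mathlib

/-! # Multirings (Marshall) -/

universe u v

/-- A multiring in the sense of Marshall: a commutative monoid under `mul` with a
multivalued addition `add : A → A → Set A`. -/
structure Multiring (A : Type u) where
  add : A → A → Set A
  mul : A → A → A
  neg : A → A
  zero : A
  one : A
  add_nonempty : ∀ a b : A, (add a b).Nonempty
  add_comm' : ∀ a b : A, add a b = add b a
  add_assoc' : ∀ a b c : A, (⋃ x ∈ add b c, add a x) = ⋃ y ∈ add a b, add y c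
  add_zero' : ∀ a : A, add a zero = {a}
  zero_mem_add_neg : ∀ a : A, zero ∈ add a (neg a)
  neg_unique : ∀ a b : A, zero ∈ add a b → b = neg a
  mem_add_reverse : ∀ a b c : A, c ∈ add a b → a ∈ add c (neg b)
  mul_comm' : ∀ a b : A, mul a b = mul b a
  mul_assoc' : ∀ a b c : A, mul (mul a b) c = mul a (mul b c)
  mul_one' : ∀ a : A, mul a one = a
  mul_zero' : ∀ a : A, mul a zero = zero
  mul_mem_add : ∀ d a b c : A, c ∈ add a b → mul d c ∈ add (mul d a) (mul d b)

namespace Multiring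

variable {A : Type u} {B : Type v}

/-- `M.SumSq x` : `x` belongs to some finite multivalued sum of squares of `A`. -/
inductive SumSq (M : Multiring A) : A → Prop
  | sq : ∀ a : A, SumSq M (M.mul a a)
  | step : ∀ a b c : A, SumSq M b → c ∈ M.add (M.mul a a) b → SumSq M c

/-- A real reduced multiring: `−1 ∉ ΣA²`, `a³ = a`, `a + ab² = {a}`, and
`a² + b²` is a singleton. -/
def IsRealReduced (M : Multiring A) : Prop :=
  ¬ M.SumSq (M.neg M.one) ∧
  (∀ a : A, M.mul a (M.mul a a) = a) ∧
  (∀ a b : A, M.add a (M.mul a (M.mul b b)) = {a}) ∧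
  (∀ a b : A, ∃! c : A, c ∈ M.add (M.mul a a) (M.mul b b))

/-- Quadratically tuned multiring: axioms QT0–QT5. -/
def IsQT (M : Multiring A) : Prop :=
  -- QT0
  (∀ a : A, M.mul a (M.mul a a) = a) ∧
  -- QT1
  (∀ a : A, M.one ∈ M.add M.one a) ∧
  -- QT2
  (∀ a b c d e : A, M.mul a d = M.mul b d → M.mul a e = M.mul b e →
    c ∈ M.add (M.mul (M.mul c c) d) (M.mul (M.mul c c) e) → M.mul a c = M.mul b c) ∧
  -- QT3
  (∀ a b c d e : A,
    e ∈ M.add (M.mul (M.mul (M.mul c e) (M.mul c e)) a)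
              (M.mul (M.mul (M.mul d e) (M.mul d e)) b) →
    e ∈ M.add (M.mul (M.mul e e) a) (M.mul (M.mul e e) b)) ∧
  -- QT4
  (∀ a b c : A, a ∈ M.add (M.mul (M.mul a a) b) (M.mul (M.mul a a) c) →
    M.mul a a ∈ M.add (M.mul (M.mul a b) (M.mul a b)) (M.mul (M.mul a c) (M.mul a c))) ∧
  -- QT5
  (∀ a b e : A, e ∈ M.add a b ↔
    (e ∈ M.add (M.mul a (M.mul e e)) (M.mul b (M.mul e e)) ∧
     M.neg a ∈ M.add (M.mul b (M.mul a a)) (M.neg (M.mul e (M.mul a a))) ∧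
     M.neg b ∈ M.add (M.mul a (M.mul b b)) (M.neg (M.mul e (M.mul b b)))))

/-- Morphism of multirings. -/
def IsHom (M : Multiring A) (N : Multiring B) (f : A → B) : Prop :=
  f M.zero = N.zero ∧ f M.one = N.one ∧
  (∀ a : A, f (M.neg a) = N.neg (f a)) ∧
  (∀ a b : A, f (M.mul a b) = N.mul (f a) (f b)) ∧
  (∀ a b c : A, c ∈ M.add a b → f c ∈ N.add (f a) (f b))

/-- Isomorphism of multirings: a bijective morphism whose inverse is also a morphism. -/
def IsIso (M : Multiring A) (N : Multiring B) (f : A → B) : Prop :=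
  IsHom M N f ∧ ∃ g : B → A, IsHom N M g ∧ (∀ a, g (f a) = a) ∧ (∀ b, f (g b) = b)

end Multiring

/-! ## The multifield `Q₂ = {−1,0,1}` (realized on `SignType`) -/

/-- Multivalued addition of `Q₂`: `a+0={a}`, `1+1={1}`, `(−1)+(−1)={−1}`,
`1+(−1)={−1,0,1}`. -/
def Q2add (a b : SignType) : Set SignType :=
  if a = 0 then {b} else if b = 0 then {a} else if a = b then {a} else Set.univ

namespace Multiring

variable {A : Type u}

/-- A point of the real spectrum: a multiring morphism `σ : A → Q₂`. -/
def IsSperMap (M : Multiring A) (σ : A → SignType) : Prop :=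
  σ M.zero = 0 ∧ σ M.one = 1 ∧
  (∀ a : A, σ (M.neg a) = -σ a) ∧
  (∀ a b : A, σ (M.mul a b) = σ a * σ b) ∧
  (∀ a b c : A, c ∈ M.add a b → σ c ∈ Q2add (σ a) (σ b))

/-- `Sper(A)`, the real spectrum of the multiring `A`. -/
def Sper (M : Multiring A) : Type u := {σ : A → SignType // M.IsSperMap σ}

/-- A preordering of a multiring. -/
def IsPreordering (M : Multiring A) (T : Set A) : Prop :=
  (∀ a ∈ T, ∀ b ∈ T, M.add a b ⊆ T) ∧
  (∀ a ∈ T, ∀ b ∈ T, M.mul a b ∈ T) ∧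
  (∀ a : A, M.mul a a ∈ T)

/-- `X_T = {σ ∈ Sper(A) : σ(t) ∈ {0,1} for all t ∈ T}`. -/
def XT (M : Multiring A) (T : Set A) : Type u :=
  {σ : A → SignType // M.IsSperMap σ ∧ ∀ t ∈ T, σ t = 0 ∨ σ t = 1}

/-- The evaluation map `a ↦ ā`, `ā(σ) = σ(a)`, into `Q₂^{X_T}`. -/
def evalT (M : Multiring A) (T : Set A) (a : A) : XT M T → SignType :=
  fun σ => σ.1 a

/-- The carrier of `Q_T(A)`: the image of `A` in `Q₂^{X_T}`. -/
def QTcar (M : Multiring A) (T : Set A) : Set (XT M T → SignType) :=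
  Set.range (evalT M T)

/-- The evaluation map `a ↦ ā` viewed as a map onto `Q_T(A)`. -/
def evalQ (M : Multiring A) (T : Set A) (a : A) : QTcar M T :=
  ⟨evalT M T a, a, rfl⟩

/-- Evaluation `a ↦ â` into `Q₂^{Sper(A)}`. -/
def hat (M : Multiring A) (a : A) : M.Sper → SignType := fun σ => σ.1 a

end Multiring

/-! ## Abstract real spectra -/

/-- Representation: `D(a,b)` for a set `G` of functions `X → {−1,0,1}`. -/
def Dfun {X : Type u} (G : Set (X → SignType)) (a b : X → SignType) : Set (X → SignType) :=
  {c | c ∈ G ∧ ∀ x : X, 0 < a x * c x ∨ 0 < b x * c x ∨ c x = 0}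

/-- Transversal representation `Dᵗ(a,b)`. -/
def Dtfun {X : Type u} (G : Set (X → SignType)) (a b : X → SignType) : Set (X → SignType) :=
  {c | c ∈ G ∧ ∀ x : X, 0 < a x * c x ∨ 0 < b x * c x ∨ (c x = 0 ∧ b x = -a x)}

/-- An abstract real spectrum (space of signs) on a set `X`. -/
structure ARS (X : Type u) where
  G : Set (X → SignType)
  nonemptyX : Nonempty X
  one_mem : (fun _ => (1 : SignType)) ∈ G
  zero_mem : (fun _ => (0 : SignType)) ∈ G
  negOne_mem : (fun _ => (-1 : SignType)) ∈ G
  mul_mem : ∀ {a b : X → SignType}, a ∈ G → b ∈ G → (fun x => a x * b x) ∈ G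
  separates : ∀ x y : X, x ≠ y → ∃ a ∈ G, a x ≠ a y
  ax2 : ∀ P : Set (X → SignType), P ⊆ G → (fun _ => (1 : SignType)) ∈ P →
    (∀ {a b : X → SignType}, a ∈ P → b ∈ P → (fun x => a x * b x) ∈ P) →
    (∀ a ∈ G, a ∈ P ∨ (fun x => -(a x)) ∈ P) →
    (fun _ => (-1 : SignType)) ∉ P →
    (∀ {a b : X → SignType}, a ∈ P → b ∈ P → Dfun G a b ⊆ P) →
    (∀ {a b : X → SignType}, a ∈ G → b ∈ G →
      (fun x => a x * b x) ∈ P → (fun x => -(a x * b x)) ∈ P →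
      (a ∈ P ∧ (fun x => -(a x)) ∈ P) ∨ (b ∈ P ∧ (fun x => -(b x)) ∈ P)) →
    ∃! x : X, P = {a | a ∈ G ∧ a x ≤ 0}
  ax3a : ∀ a b c p q : X → SignType, a ∈ G → b ∈ G → c ∈ G →
    q ∈ Dfun G b c → p ∈ Dfun G a q → ∃ r ∈ Dfun G a b, p ∈ Dfun G r c
  ax3b : ∀ a b : X → SignType, a ∈ G → b ∈ G → (Dtfun G a b).Nonempty

/-! ## Ternary semigroups, real semigroups and pre-real semigroups -/

/-- The raw data of a ternary structure with a ternary relation `D`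
(`D a b c` means `a ∈ D(b,c)`). -/
structure TernaryStruct (G : Type u) where
  mul : G → G → G
  one : G
  zero : G
  negOne : G
  D : G → G → G → Prop

namespace TernaryStruct

variable {G : Type u}

def neg (S : TernaryStruct G) (a : G) : G := S.mul S.negOne a

/-- Transversal representation: `a ∈ Dᵗ(b,c) ⟺ a ∈ D(b,c) ∧ −b ∈ D(−a,c) ∧ −c ∈ D(b,−a)`. -/
def Dt (S : TernaryStruct G) (a b c : G) : Prop :=
  S.D a b c ∧ S.D (S.neg b) (S.neg a) c ∧ S.D (S.neg c) b (S.neg a)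

end TernaryStruct

/-- Axioms of a ternary semigroup together with [RS0]-[RS6] and [RS8]. -/
structure PreRealSemigroupAux (G : Type u) extends TernaryStruct G where
  mul_comm' : ∀ a b : G, mul a b = mul b a
  mul_assoc' : ∀ a b c : G, mul (mul a b) c = mul a (mul b c)
  mul_one' : ∀ a : G, mul a one = a
  cube : ∀ a : G, mul a (mul a a) = a
  negOne_ne_one : negOne ≠ one
  negOne_mul_negOne : mul negOne negOne = one
  mul_zero' : ∀ a : G, mul a zero = zero
  neg_fix : ∀ a : G, mul negOne a = a → a = zero
  rs0 : ∀ a b c : G, D c a b ↔ D c b a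
  rs1 : ∀ a b : G, D a a b
  rs2 : ∀ a b c d : G, D a b c → D (mul a d) (mul b d) (mul c d)
  rs3 : ∀ a b c d e : G, toTernaryStruct.Dt a b c → toTernaryStruct.Dt c d e →
    ∃ x : G, toTernaryStruct.Dt x b d ∧ toTernaryStruct.Dt a x e
  rs4 : ∀ a b c d e : G, D e (mul (mul c c) a) (mul (mul d d) b) → D e a b
  rs5 : ∀ a b c d e : G, mul a d = mul b d → mul a e = mul b e → D c d e → mul a c = mul b c
  rs6 : ∀ a b c : G, D c a b →
    toTernaryStruct.Dt c (mul (mul c c) a) (mul (mul c c) b)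
  rs8 : ∀ a b c : G, D a b c → D (mul a a) (mul b b) (mul c c)

/-- A real semigroup: [RS0]-[RS8]. -/
structure RealSemigroup (G : Type u) extends PreRealSemigroupAux G where
  rs7 : ∀ a b x : G, toTernaryStruct.Dt x a (toTernaryStruct.neg b) →
    toTernaryStruct.Dt x b (toTernaryStruct.neg a) → a = b

/-- A pre-real semigroup: [RS0]-[RS6], [RS8] and [RS7']. -/
structure PreRealSemigroup (G : Type u) extends PreRealSemigroupAux G where
  rs7' : ∀ x a : G, toTernaryStruct.Dt x zero a ↔ x = a

/-- Morphism of pre-real semigroups: preserves `·`, `1`, `0`, `−1` and `D`. -/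
def IsPRSHom {G : Type u} {H : Type v} (S : PreRealSemigroup G) (T : PreRealSemigroup H)
    (f : G → H) : Prop :=
  f S.one = T.one ∧ f S.zero = T.zero ∧ f S.negOne = T.negOne ∧
  (∀ a b : G, f (S.mul a b) = T.mul (f a) (f b)) ∧
  (∀ a b c : G, S.D a b c → T.D (f a) (f b) (f c))

/-! ## Quadratic forms and isometry -/

/-- Weak isometry of forms (as lists of entries) over a multiring. -/
inductive WeakIsom {A : Type u} (M : Multiring A) : List A → List A → Prop
  | one (a : A) : WeakIsom M [a] [a]
  | two (a b c d : A) : M.mul a b = M.mul c d → (M.add a b ∩ M.add c d).Nonempty →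
      WeakIsom M [a, b] [c, d]
  | step (a₁ b₁ x y : A) (as bs zs : List A) :
      2 ≤ as.length → as.length = bs.length → zs.length + 1 = as.length →
      WeakIsom M [a₁, x] [b₁, y] → WeakIsom M as (x :: zs) → WeakIsom M bs (y :: zs) →
      WeakIsom M (a₁ :: as) (b₁ :: bs)

/-- Strong isometry of forms (as lists of entries) over a multiring. -/
inductive StrongIsom {A : Type u} (M : Multiring A) : List A → List A → Prop
  | one (a : A) : StrongIsom M [a] [a]
  | two (a b c d : A) : M.mul a b = M.mul c d → M.add a b = M.add c d →
      StrongIsom M [a, b] [c, d]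
  | step (a₁ b₁ x y : A) (as bs zs : List A) :
      2 ≤ as.length → as.length = bs.length → zs.length + 1 = as.length →
      StrongIsom M [a₁, x] [b₁, y] → StrongIsom M as (x :: zs) → StrongIsom M bs (y :: zs) →
      StrongIsom M (a₁ :: as) (b₁ :: bs)



/-!
In a real reduced multiring the sum `a² + b²` is a single element `s`, and `s` is a unit for `a`
and `b` (`a s ∈ a + ab² = {a}`). The rigidity fact behind everything is: an element `e ∈ u + v`
which fixes `u` and `v` is this `s` for `u, v`. For `e = x²` and `u, v = xb, xc` this shows
that every `x ∈ D(b, c)` is fixed by the unit of `b, c`, and that turns the three conditions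
defining `Dᵗ(b, c)` into plain membership `x ∈ b + c`; for `e = a²` and `u, v = ab, ac` it is RS8.
The remaining axioms reduce to associativity of the multivalued sum (RS3), `a + a = {a}` (RS7),
and absorption `a + ab² = {a}` (RS4, RS5).
-/

namespace Multiring

variable {A : Type u} (M : Multiring A)

local infixl:70 " ⬝ " => M.mul
local infixl:65 " ∔ " => M.add

local instance : Std.Associative M.mul := ⟨M.mul_assoc'⟩
local instance : Std.Commutative M.mul := ⟨M.mul_comm'⟩

theorem one_mul (a : A) : M.one ⬝ a = a := by rw [M.mul_comm', M.mul_one']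

theorem neg_one_mul (a : A) : M.neg M.one ⬝ a = M.neg a := by
  have h := M.mul_mem_add a _ _ _ (M.zero_mem_add_neg M.one)
  rw [M.mul_zero', M.mul_one'] at h
  rw [M.mul_comm', M.neg_unique a _ h]

theorem neg_neg (a : A) : M.neg (M.neg a) = a :=
  (M.neg_unique _ _ (by rw [M.add_comm']; exact M.zero_mem_add_neg a)).symm

theorem mul_neg (a b : A) : a ⬝ M.neg b = M.neg (a ⬝ b) := by
  rw [← M.neg_one_mul b, ← M.neg_one_mul (a ⬝ b)]
  ac_rfl

theorem neg_mul_neg (a b : A) : M.neg a ⬝ M.neg b = a ⬝ b := by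
  rw [M.mul_neg, M.mul_comm' (M.neg a) b, M.mul_neg, M.neg_neg, M.mul_comm']

theorem neg_mem_add_neg {a b c : A} (h : c ∈ a ∔ b) : M.neg c ∈ M.neg a ∔ M.neg b := by
  simpa only [neg_one_mul] using M.mul_mem_add (M.neg M.one) _ _ _ h

theorem mem_add_neg_of_mem_add {a b c : A} (h : c ∈ a ∔ b) : b ∈ c ∔ M.neg a :=
  M.mem_add_reverse b a c (by rwa [M.add_comm'])

theorem mem_add_of_mem_add_neg {a b c : A} (h : a ∈ c ∔ M.neg b) : c ∈ a ∔ b := by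
  simpa only [M.neg_neg] using M.mem_add_reverse c (M.neg b) a h

theorem neg_mem_neg_add_iff {a b c : A} : M.neg c ∈ M.neg a ∔ b ↔ a ∈ c ∔ b := by
  constructor
  · intro h
    have h' := M.neg_mem_add_neg h
    rw [M.neg_neg, M.neg_neg] at h'
    exact M.mem_add_of_mem_add_neg h'
  · intro h
    simpa only [M.neg_neg] using M.neg_mem_add_neg (M.mem_add_reverse c b a h)

theorem exists_mem_add_of_mem_add_of_mem_add {a b c d e : A} (ha : a ∈ b ∔ c)
    (hc : c ∈ d ∔ e) : ∃ x ∈ b ∔ d, a ∈ x ∔ e := by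
  have h : a ∈ ⋃ x ∈ d ∔ e, b ∔ x := Set.mem_biUnion hc ha
  rw [M.add_assoc'] at h
  simpa only [Set.mem_iUnion, exists_prop] using h

theorem mem_mul_self_add_mul_of_mem_add {e u v : A} (he : e ∈ u ∔ v) (heu : e ⬝ u = u) :
    u ∈ u ⬝ u ∔ u ⬝ v := by
  have h := M.mul_mem_add u _ _ _ (M.mem_add_reverse u v e he)
  rw [M.mul_comm' u e, heu, M.mul_neg] at h
  exact M.mem_add_of_mem_add_neg h

def addSet (S T : Set A) : Set A := ⋃ x ∈ S, ⋃ y ∈ T, x ∔ y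

theorem mem_addSet {S T : Set A} {c : A} :
    c ∈ M.addSet S T ↔ ∃ x ∈ S, ∃ y ∈ T, c ∈ x ∔ y := by
  simp [addSet]

theorem addSet_singleton (a b : A) : M.addSet {a} {b} = a ∔ b := by
  ext c; simp [addSet]

theorem addSet_comm (S T : Set A) : M.addSet S T = M.addSet T S := by
  ext c
  simp only [mem_addSet]
  constructor <;> rintro ⟨x, hx, y, hy, hc⟩ <;> exact ⟨y, hy, x, hx, by rwa [M.add_comm']⟩

theorem addSet_assoc (S T U : Set A) :
    M.addSet (M.addSet S T) U = M.addSet S (M.addSet T U) := by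
  ext c
  simp only [mem_addSet]
  constructor
  · rintro ⟨w, ⟨x, hx, y, hy, hw⟩, z, hz, hc⟩
    have h : c ∈ ⋃ w ∈ x ∔ y, w ∔ z := Set.mem_biUnion hw hc
    rw [← M.add_assoc'] at h
    obtain ⟨v, hv, hc⟩ := Set.mem_iUnion₂.1 h
    exact ⟨x, hx, v, ⟨y, hy, z, hz, hv⟩, hc⟩
  · rintro ⟨x, hx, v, ⟨y, hy, z, hz, hv⟩, hc⟩
    obtain ⟨w, hw, hc⟩ := M.exists_mem_add_of_mem_add_of_mem_add hc hv
    exact ⟨w, ⟨x, hx, y, hy, hw⟩, z, hz, hc⟩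

theorem addSet_add_add_comm (a b c d : A) :
    M.addSet (a ∔ b) (c ∔ d) = M.addSet (a ∔ c) (b ∔ d) := by
  simp only [← addSet_singleton, addSet_assoc]
  rw [← M.addSet_assoc {b}, M.addSet_comm {b} {c}, M.addSet_assoc {c}]

theorem singleton_addSet_add (a b c : A) : M.addSet {a} (b ∔ c) = M.addSet (a ∔ b) {c} := by
  rw [← addSet_singleton, ← addSet_singleton, addSet_assoc]

def toTernaryStruct : TernaryStruct A where
  mul := M.mul
  one := M.one
  zero := M.zero
  negOne := M.neg M.one
  D d a b := d ∈ d ⬝ d ⬝ a ∔ d ⬝ d ⬝ b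

theorem toTernaryStruct_D {d a b : A} :
    M.toTernaryStruct.D d a b ↔ d ∈ d ⬝ d ⬝ a ∔ d ⬝ d ⬝ b :=
  Iff.rfl

theorem toTernaryStruct_neg (a : A) : M.toTernaryStruct.neg a = M.neg a :=
  M.neg_one_mul a

theorem toTernaryStruct_Dt_iff {x b c : A} :
    M.toTernaryStruct.Dt x b c ↔
      x ∈ x ⬝ x ⬝ b ∔ x ⬝ x ⬝ c ∧ b ⬝ b ⬝ x ∈ b ∔ b ⬝ b ⬝ c ∧ c ⬝ c ⬝ x ∈ c ∔ c ⬝ c ⬝ b := by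
  simp only [TernaryStruct.Dt, toTernaryStruct_neg, toTernaryStruct_D, neg_mul_neg]
  simp only [mul_neg]
  rw [M.add_comm' (c ⬝ c ⬝ b), M.neg_mem_neg_add_iff, M.neg_mem_neg_add_iff]

theorem neg_one_ne_one (hreal : ¬ M.SumSq (M.neg M.one)) : M.neg M.one ≠ M.one := by
  intro h
  apply hreal
  rw [h, ← M.mul_one' M.one]
  exact SumSq.sq M.one

section RealReduced

variable (hcube : ∀ a : A, M.mul a (M.mul a a) = a)
  (habs : ∀ a b : A, M.add a (M.mul a (M.mul b b)) = {a})
  (hsq : ∀ a b : A, ∃! c : A, c ∈ M.add (M.mul a a) (M.mul b b))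

include hcube in
theorem mul_self_mul_mul_self (a : A) : a ⬝ a ⬝ (a ⬝ a) = a ⬝ a := by
  rw [M.mul_assoc', hcube]

include hcube in
theorem mem_mul_self_mul_add_of_mem_add {a b c : A} (h : c ∈ a ∔ b) :
    c ∈ c ⬝ c ⬝ a ∔ c ⬝ c ⬝ b := by
  have h' := M.mul_mem_add c _ _ _ (M.mul_mem_add c _ _ _ h)
  rwa [hcube, ← M.mul_assoc' c c a, ← M.mul_assoc' c c b] at h'

include hcube in
theorem mul_self_mul_mem_add_of_mem_add {x b c : A} (h : x ∈ b ∔ c) :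
    b ⬝ b ⬝ x ∈ b ∔ b ⬝ b ⬝ c := by
  have h' := M.mul_mem_add (b ⬝ b) _ _ _ (M.mem_add_reverse b c x h)
  rw [M.mul_comm' (b ⬝ b) b, hcube, M.mul_neg] at h'
  exact M.mem_add_of_mem_add_neg h'

include habs in
theorem add_self (a : A) : a ∔ a = {a} := by
  simpa only [M.mul_one'] using habs a M.one

include habs in
theorem eq_zero_of_neg_one_mul_eq {a : A} (h : M.neg M.one ⬝ a = a) : a = M.zero := by
  rw [M.neg_one_mul] at h
  have h0 := M.zero_mem_add_neg a
  rw [h, M.add_self habs] at h0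
  exact h0.symm

include habs in
theorem one_add_mul_self (w : A) : M.one ∔ w ⬝ w = {M.one} := by
  simpa only [M.one_mul] using habs M.one w

include habs in
theorem mem_one_add_neg_one (w : A) : w ∈ M.one ∔ M.neg M.one := by
  obtain ⟨u, hu⟩ := M.add_nonempty M.one w
  have huw : u ⬝ w ∈ w ∔ w ⬝ w := by
    have h := M.mul_mem_add w _ _ _ hu
    rwa [M.mul_one', M.mul_comm' w u] at h
  have huu : u ⬝ u ∈ u ∔ u ⬝ w := by
    have h := M.mul_mem_add u _ _ _ hu
    rwa [M.mul_one'] at h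
  -- `u² ∈ (1 + w) + (w + w²) = (1 + w²) + (w + w) = 1 + w`
  have huu' : u ⬝ u ∈ M.one ∔ w := by
    have h := M.mem_addSet.2 ⟨u, hu, u ⬝ w, huw, huu⟩
    rwa [M.add_comm' w (w ⬝ w), M.addSet_add_add_comm, M.one_add_mul_self habs,
      M.add_self habs, M.addSet_singleton] at h
  have hu1 : u ⬝ u ∈ M.one ∔ M.neg M.one := by
    refine M.mem_add_neg_of_mem_add (?_ : M.one ∈ M.one ∔ u ⬝ u)
    rw [M.one_add_mul_self habs]
    rfl
  have h := M.mem_addSet.2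
    ⟨u ⬝ u, hu1, M.neg M.one, Set.mem_singleton _, M.mem_add_neg_of_mem_add huu'⟩
  rwa [← M.singleton_addSet_add, M.add_self habs, M.addSet_singleton] at h

include habs in
theorem one_mem_one_add (w : A) : M.one ∈ M.one ∔ w := by
  have h := M.mem_add_reverse _ _ _ (M.mem_one_add_neg_one habs w)
  rwa [M.neg_neg, M.add_comm'] at h

include habs in
theorem mem_add_mul_self_mul (x w : A) : x ∈ x ∔ x ⬝ x ⬝ w := by
  have h := M.mul_mem_add x _ _ _ (M.one_mem_one_add habs (x ⬝ w))
  rwa [M.mul_one', ← M.mul_assoc'] at h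

include habs in
theorem mem_add_of_mem_mul_mul_self_add {e a c z : A} (h : e ∈ e ⬝ e ⬝ a ⬝ (c ⬝ c) ∔ z) :
    e ∈ e ⬝ e ⬝ a ∔ z := by
  have he : e ∈ e ⬝ e ⬝ a ∔ e := by
    rw [M.add_comm']
    exact M.mem_add_mul_self_mul habs e a
  have h' := M.mem_addSet.2 ⟨_, Set.mem_singleton _, _, h, he⟩
  rwa [M.singleton_addSet_add, habs, M.addSet_singleton] at h'

include habs in
theorem eq_of_mem_add_of_mem_mul_mul_self_add {u v w d e : A}
    (hv : v ∈ u ⬝ (d ⬝ d) ∔ u ⬝ (e ⬝ e)) (hw : w ∈ u ∔ v) : w = u := by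
  have h := M.mem_addSet.2 ⟨u, Set.mem_singleton u, v, hv, hw⟩
  rwa [M.singleton_addSet_add, habs, M.addSet_singleton, habs] at h

include habs in
theorem eq_of_mem_add_neg_of_mem_add_neg {a b x : A} (h₁ : x ∈ a ∔ M.neg b)
    (h₂ : x ∈ b ∔ M.neg a) : a = b := by
  have hnx : M.neg x ∈ a ∔ M.neg b := by
    have h := M.neg_mem_add_neg h₂
    rwa [M.neg_neg, M.add_comm'] at h
  have h := M.mem_addSet.2 ⟨x, h₁, M.neg x, hnx, M.zero_mem_add_neg x⟩
  rw [M.addSet_add_add_comm, M.add_self habs, M.add_self habs, M.addSet_singleton] at h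
  have h' := congrArg M.neg (M.neg_unique _ _ h)
  rw [M.neg_neg, M.neg_neg] at h'
  exact h'.symm

include hcube habs in
theorem mul_eq_left_of_mem_mul_self_add {a b s : A} (h : s ∈ a ⬝ a ∔ b ⬝ b) : a ⬝ s = a := by
  have h' := M.mul_mem_add a _ _ _ h
  rwa [hcube, habs] at h'

include habs in
theorem eq_of_mem_add_of_mul_eq {e s w : A} (hss : s ⬝ s = s) (hes : e ⬝ s = s)
    (hsw : s ⬝ w = w) (he : e ∈ s ∔ w) : e = s := by
  have hs : s ∈ s ∔ M.neg w := by
    have h := M.mul_mem_add s _ _ _ (M.mem_add_reverse _ _ _ he)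
    rwa [hss, M.mul_comm' s e, hes, M.mul_neg, hsw] at h
  have hw : w ∈ s ∔ M.neg s := by
    have h := M.neg_mem_add_neg (M.mem_add_neg_of_mem_add hs)
    rwa [M.neg_neg, M.neg_neg, M.add_comm'] at h
  -- `e ∈ s + w ⊆ s + (s - s) = s - s`, hence `s ∈ e + s = e + e s² = {e}`
  have he' : e ∈ s ∔ M.neg s := by
    have h := M.mem_addSet.2 ⟨s, Set.mem_singleton s, w, hw, he⟩
    rwa [M.singleton_addSet_add, M.add_self habs, M.addSet_singleton] at h
  have hse : s ∈ e ∔ s := M.mem_add_of_mem_add_neg he'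
  have hes' : e ∔ s = {e} := by
    have h := habs e s
    rwa [hss, hes] at h
  rw [hes'] at hse
  exact hse.symm

include hcube habs hsq in
theorem mem_mul_self_add_mul_self {e u v : A} (he : e ∈ u ∔ v) (heu : e ⬝ u = u)
    (hev : e ⬝ v = v) : e ∈ u ⬝ u ∔ v ⬝ v := by
  obtain ⟨s, hs, hs_uniq⟩ := hsq u v
  have hsum : u ⬝ u ∔ v ⬝ v = {s} := Set.eq_singleton_iff_unique_mem.2 ⟨hs, hs_uniq⟩
  have hus : u ⬝ s = u := M.mul_eq_left_of_mem_mul_self_add hcube habs hs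
  have hvs : v ⬝ s = v :=
    M.mul_eq_left_of_mem_mul_self_add hcube habs (by rwa [M.add_comm'] at hs)
  have fixes : ∀ f, f ⬝ u = u → f ⬝ v = v → f ⬝ s = s := fun f hfu hfv => by
    have h := M.mul_mem_add f _ _ _ hs
    rwa [← M.mul_assoc', hfu, ← M.mul_assoc', hfv, hsum] at h
  have hss : s ⬝ s = s := fixes s (by rw [M.mul_comm', hus]) (by rw [M.mul_comm', hvs])
  have hsuv : s ⬝ (u ⬝ v) = u ⬝ v := by rw [← M.mul_assoc', M.mul_comm' s u, hus]
  have hu : u ∈ u ⬝ u ∔ u ⬝ v := M.mem_mul_self_add_mul_of_mem_add he heu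
  have hv : v ∈ v ⬝ v ∔ u ⬝ v := by
    have h := M.mem_mul_self_add_mul_of_mem_add (by rwa [M.add_comm'] at he) hev
    rwa [M.mul_comm' v u] at h
  have hsw := M.mem_addSet.2 ⟨u, hu, v, hv, he⟩
  rw [M.addSet_add_add_comm, hsum, M.add_self habs, M.addSet_singleton] at hsw
  rw [hsum, M.eq_of_mem_add_of_mul_eq habs hss (fixes e heu hev) hsuv hsw]
  rfl

include hcube habs hsq in
theorem mul_eq_self_of_mem_add {p y z t : A} (hp : p ∈ y ∔ z) (ht : t ∈ y ⬝ y ∔ z ⬝ z) :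
    p ⬝ t = p := by
  have fixes : ∀ y, p ⬝ p ⬝ (p ⬝ y) = p ⬝ y := fun y => by
    rw [← M.mul_assoc', M.mul_comm' (p ⬝ p) p, hcube]
  have hsq_mul : ∀ y, p ⬝ y ⬝ (p ⬝ y) = p ⬝ p ⬝ (y ⬝ y) := fun y => by ac_rfl
  have h₁ := M.mem_mul_self_add_mul_self hcube habs hsq (M.mul_mem_add p _ _ _ hp)
    (fixes y) (fixes z)
  have h₂ := M.mul_mem_add (p ⬝ p) _ _ _ ht
  rw [← hsq_mul, ← hsq_mul] at h₂
  obtain ⟨s, -, hs_uniq⟩ := hsq (p ⬝ y) (p ⬝ z)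
  have hppt : p ⬝ p ⬝ t = p ⬝ p := (hs_uniq _ h₂).trans (hs_uniq _ h₁).symm
  calc p ⬝ t = p ⬝ (p ⬝ p ⬝ t) := by rw [← M.mul_assoc', hcube]
    _ = p := by rw [hppt, hcube]

include hcube habs hsq in
theorem mul_eq_self_of_toTernaryStruct_D {x b c t : A} (hx : M.toTernaryStruct.D x b c)
    (ht : t ∈ b ⬝ b ∔ c ⬝ c) : x ⬝ t = x := by
  have hsq_mul : ∀ y, x ⬝ x ⬝ y ⬝ (x ⬝ x ⬝ y) = x ⬝ x ⬝ (y ⬝ y) := fun y => by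
    rw [show x ⬝ x ⬝ y ⬝ (x ⬝ x ⬝ y) = x ⬝ x ⬝ (x ⬝ x) ⬝ (y ⬝ y) by ac_rfl,
      M.mul_self_mul_mul_self hcube]
  have h := M.mul_mem_add (x ⬝ x) _ _ _ ht
  rw [← hsq_mul, ← hsq_mul] at h
  have h' := M.mul_eq_self_of_mem_add hcube habs hsq hx h
  rwa [← M.mul_assoc', hcube] at h'

include hcube habs hsq in
theorem toTernaryStruct_Dt_iff_mem_add {x b c : A} :
    M.toTernaryStruct.Dt x b c ↔ x ∈ b ∔ c := by
  rw [toTernaryStruct_Dt_iff]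
  constructor
  · rintro ⟨hx, hbx, hcx⟩
    obtain ⟨t, ht, -⟩ := hsq b c
    have hxt := M.mul_mem_add x _ _ _ ht
    rw [M.mul_comm' x (b ⬝ b), M.mul_comm' x (c ⬝ c)] at hxt
    -- `x = x t ∈ b²x + c²x ⊆ (b + c²b) + (c + b²c) = b + c`
    have h := M.mem_addSet.2 ⟨_, hbx, _, hcx, hxt⟩
    rwa [M.add_comm' c, M.addSet_add_add_comm, M.add_comm' (b ⬝ b ⬝ c), M.mul_comm' (c ⬝ c) b,
      M.mul_comm' (b ⬝ b) c, habs, habs, M.addSet_singleton,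
      M.mul_eq_self_of_toTernaryStruct_D hcube habs hsq hx ht] at h
  · intro h
    exact ⟨M.mem_mul_self_mul_add_of_mem_add hcube h, M.mul_self_mul_mem_add_of_mem_add hcube h,
      M.mul_self_mul_mem_add_of_mem_add hcube (by rwa [M.add_comm'] at h)⟩

include hcube habs in
theorem toTernaryStruct_D_self_left (a b : A) : M.toTernaryStruct.D a a b := by
  rw [toTernaryStruct_D, M.mul_comm' (a ⬝ a) a, hcube]
  exact M.mem_add_mul_self_mul habs a b

include hcube in
theorem toTernaryStruct_D_mul {a b c d : A} (h : M.toTernaryStruct.D a b c) :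
    M.toTernaryStruct.D (a ⬝ d) (b ⬝ d) (c ⬝ d) := by
  have hd : ∀ y, a ⬝ d ⬝ (a ⬝ d) ⬝ (y ⬝ d) = d ⬝ (a ⬝ a ⬝ y) := fun y => by
    rw [show a ⬝ d ⬝ (a ⬝ d) ⬝ (y ⬝ d) = a ⬝ a ⬝ y ⬝ (d ⬝ (d ⬝ d)) by ac_rfl, hcube,
      M.mul_comm' (a ⬝ a ⬝ y) d]
  rw [toTernaryStruct_D, hd, hd, M.mul_comm' a d]
  exact M.mul_mem_add d _ _ _ h

include habs in
theorem toTernaryStruct_D_of_D_mul_self {a b c d e : A}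
    (h : M.toTernaryStruct.D e (c ⬝ c ⬝ a) (d ⬝ d ⬝ b)) : M.toTernaryStruct.D e a b := by
  have reorder : ∀ f y, e ⬝ e ⬝ (f ⬝ f ⬝ y) = e ⬝ e ⬝ y ⬝ (f ⬝ f) := fun f y => by ac_rfl
  rw [toTernaryStruct_D, reorder, reorder] at h
  have h' := M.mem_add_of_mem_mul_mul_self_add habs h
  rw [toTernaryStruct_D, M.add_comm']
  rw [M.add_comm'] at h'
  exact M.mem_add_of_mem_mul_mul_self_add habs h'

include hcube habs hsq in
theorem mul_eq_mul_of_toTernaryStruct_D {a b c d e : A} (had : a ⬝ d = b ⬝ d)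
    (hae : a ⬝ e = b ⬝ e) (h : M.toTernaryStruct.D c d e) : a ⬝ c = b ⬝ c := by
  obtain ⟨t, ht, -⟩ := hsq d e
  have hct : c ⬝ t = c := M.mul_eq_self_of_toTernaryStruct_D hcube habs hsq h ht
  have hdt : d ⬝ t = d := M.mul_eq_left_of_mem_mul_self_add hcube habs ht
  have het : e ⬝ t = e :=
    M.mul_eq_left_of_mem_mul_self_add hcube habs (by rwa [M.add_comm'] at ht)
  -- `q t ∈ q d² + q e² = p t d² + p t e²`, and `p t` absorbs that
  have absorb : ∀ p q w, p ⬝ d = q ⬝ d → p ⬝ e = q ⬝ e → w ∈ p ⬝ t ∔ q ⬝ t → w = p ⬝ t := by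
    intro p q w hpd hpe hw
    have hqt := M.mul_mem_add q _ _ _ ht
    have hd' : q ⬝ (d ⬝ d) = p ⬝ t ⬝ (d ⬝ d) := by
      rw [show p ⬝ t ⬝ (d ⬝ d) = p ⬝ d ⬝ (d ⬝ t) by ac_rfl, hdt, hpd, M.mul_assoc']
    have he' : q ⬝ (e ⬝ e) = p ⬝ t ⬝ (e ⬝ e) := by
      rw [show p ⬝ t ⬝ (e ⬝ e) = p ⬝ e ⬝ (e ⬝ t) by ac_rfl, het, hpe, M.mul_assoc']
    rw [hd', he'] at hqt
    exact M.eq_of_mem_add_of_mem_mul_mul_self_add habs hqt hw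
  obtain ⟨w, hw⟩ := M.add_nonempty (a ⬝ t) (b ⬝ t)
  have hab : a ⬝ t = b ⬝ t := (absorb a b w had hae hw).symm.trans
    (absorb b a w had.symm hae.symm (by rwa [M.add_comm'] at hw))
  have hc : ∀ p, p ⬝ c = p ⬝ t ⬝ c := fun p => by rw [M.mul_assoc', M.mul_comm' t c, hct]
  rw [hc a, hc b, hab]

include hcube habs hsq in
theorem toTernaryStruct_D_mul_self {a b c : A} (h : M.toTernaryStruct.D a b c) :
    M.toTernaryStruct.D (a ⬝ a) (b ⬝ b) (c ⬝ c) := by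
  have hcancel : ∀ y, a ⬝ (a ⬝ a ⬝ y) = a ⬝ y := fun y => by rw [← M.mul_assoc', hcube]
  have hfix : ∀ y, a ⬝ a ⬝ (a ⬝ y) = a ⬝ y := fun y => by
    rw [← M.mul_assoc', M.mul_comm' (a ⬝ a) a, hcube]
  have hsq_mul : ∀ y, a ⬝ a ⬝ (a ⬝ a) ⬝ (y ⬝ y) = a ⬝ y ⬝ (a ⬝ y) := fun y => by
    rw [M.mul_self_mul_mul_self hcube]; ac_rfl
  have h' : a ⬝ a ∈ a ⬝ b ∔ a ⬝ c := by
    simpa only [hcancel] using M.mul_mem_add a _ _ _ h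
  rw [toTernaryStruct_D, hsq_mul, hsq_mul]
  exact M.mem_mul_self_add_mul_self hcube habs hsq h' (hfix b) (hfix c)

end RealReduced

def toRealSemigroup (h : M.IsRealReduced) : RealSemigroup A :=
  have hcube := h.2.1
  have habs := h.2.2.1
  have hsq := h.2.2.2
  have hDt : ∀ x b c, M.toTernaryStruct.Dt x b c ↔ x ∈ b ∔ c := fun _ _ _ =>
    M.toTernaryStruct_Dt_iff_mem_add hcube habs hsq
  { toTernaryStruct := M.toTernaryStruct
    mul_comm' := M.mul_comm'
    mul_assoc' := M.mul_assoc'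
    mul_one' := M.mul_one'
    cube := hcube
    negOne_ne_one := M.neg_one_ne_one h.1
    negOne_mul_negOne := (M.neg_mul_neg M.one M.one).trans (M.mul_one' M.one)
    mul_zero' := M.mul_zero'
    neg_fix := fun _ => M.eq_zero_of_neg_one_mul_eq habs
    rs0 := fun _ _ _ => by rw [toTernaryStruct_D, toTernaryStruct_D, M.add_comm']
    rs1 := M.toTernaryStruct_D_self_left hcube habs
    rs2 := fun _ _ _ _ => M.toTernaryStruct_D_mul hcube
    rs3 := fun _ _ _ _ _ h₁ h₂ => by
      simpa only [hDt] using
        M.exists_mem_add_of_mem_add_of_mem_add ((hDt _ _ _).1 h₁) ((hDt _ _ _).1 h₂)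
    rs4 := fun _ _ _ _ _ => M.toTernaryStruct_D_of_D_mul_self habs
    rs5 := fun _ _ _ _ _ => M.mul_eq_mul_of_toTernaryStruct_D hcube habs hsq
    rs6 := fun _ _ _ h => (hDt _ _ _).2 h
    rs8 := fun _ _ _ => M.toTernaryStruct_D_mul_self hcube habs hsq
    rs7 := fun _ _ _ h₁ h₂ => by
      rw [hDt, toTernaryStruct_neg] at h₁ h₂
      exact M.eq_of_mem_add_neg_of_mem_add_neg habs h₁ h₂ }

end Multiring

/-- For a real reduced multiring `A`, defining
`d ∈ D(a,b) ⟺ d ∈ d²a + d²b` makes `(A, ·, 1, 0, −1, D)` a real semigroup. -/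
theorem statement_8 {A : Type u} (M : Multiring A) (h : M.IsRealReduced) :
    ∃ S : RealSemigroup A,
      S.mul = M.mul ∧ S.one = M.one ∧ S.zero = M.zero ∧ S.negOne = M.neg M.one ∧
      (∀ d a b : A, S.D d a b ↔
        d ∈ M.add (M.mul (M.mul d d) a) (M.mul (M.mul d d) b)) :=
  ⟨M.toRealSemigroup h, rfl, rfl, rfl, rfl, fun _ _ _ => Iff.rfl⟩
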